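/- arXiv:1804.00137 — 8 statements merged into one kernel-verified Lean document; each statement's English description precedes it below -/
import Mathlib

section
/- Let H be a graph, let C be a removable cycle in H such that every vertex of C has degree at most Δ in H, and let φ be a partial proper Δ-coloring of H in which every vertex of C is uncolored. Then there exists a partial proper Δ-coloring φ' of H that colors all vertices of C and agrees with φ on V(H) \ V(C). -/
open SimpleGraph

/-- `H` is a minor of `G` (branch-set definition). -/
def SimpleGraph.HasMinor {V : Type*} {W : Type*} (G : SimpleGraph V) (H : SimpleGraph W) : Prop :=
  ∃ B : W → Set V,
    (∀ w, (B w).Nonempty) ∧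
    (∀ w, (G.induce (B w)).Connected) ∧
    (Pairwise fun w₁ w₂ => Disjoint (B w₁) (B w₂)) ∧
    (∀ w₁ w₂, H.Adj w₁ w₂ → ∃ v₁ ∈ B w₁, ∃ v₂ ∈ B w₂, G.Adj v₁ v₂)

/-- Planarity via Wagner's theorem: no `K₅` minor and no `K₃,₃` minor. -/
def SimpleGraph.IsPlanar {V : Type*} (G : SimpleGraph V) : Prop :=
  ¬ G.HasMinor (completeGraph (Fin 5)) ∧
  ¬ G.HasMinor (completeBipartiteGraph (Fin 3) (Fin 3))

/-- The induced subgraph on `S` is (isomorphic to) a complete graph. -/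
def SimpleGraph.InducedComplete {V : Type*} (G : SimpleGraph V) (S : Set V) : Prop :=
  ∀ x ∈ S, ∀ y ∈ S, x ≠ y → G.Adj x y

/-- The induced subgraph on `S` is isomorphic to a cycle graph of odd length. -/
def SimpleGraph.InducedOddCycle {V : Type*} (G : SimpleGraph V) (S : Set V) : Prop :=
  ∃ n : ℕ, Odd n ∧ Nonempty ((G.induce S) ≃g cycleGraph n)

/-- A simple cycle `c` in `G` is removable if the induced graph on its vertex set is
neither isomorphic to a complete graph nor to a cycle graph of odd length. -/
def SimpleGraph.Walk.IsRemovable {V : Type*} {G : SimpleGraph V} {v : V}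
    (c : G.Walk v v) : Prop :=
  ¬ G.InducedComplete {x | x ∈ c.support} ∧ ¬ G.InducedOddCycle {x | x ∈ c.support}

/-!
Give every vertex `u` of the cycle the list of colours not used by its coloured neighbours
off the cycle. Since `deg u ≤ Δ`, this list is at least as long as the number of neighbours
of `u` on the cycle, so it suffices that the graph `H` induced on the cycle, which is
Hamiltonian, is degree-choosable unless it is complete or an odd cycle.

Colouring greedily towards a vertex whose list is longer than its degree works in any
connected graph. If every list is tight and two adjacent vertices `x`, `y` have different
lists, colour `x` first with a colour missing from `y`'s list: `H - x` still has a
Hamiltonian path, and `y` now has a spare colour. Otherwise all lists agree and `H` is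
regular. If `H` is 2-regular it is the cycle itself, hence even and 2-colourable. If it has
degree at least 3, colour alike two non-adjacent vertices `u`, `w` with a common neighbour
`r`, chosen so that `H - u - w` stays connected; then `r` has a spare colour.
-/

open Finset

namespace SimpleGraph

variable {V α : Type*} {G : SimpleGraph V}

theorem exists_adj_of_preconnected {s t : Finset V} (hs : (G.induce (s : Set V)).Preconnected)
    (hts : t ⊆ s) {x y : V} (hx : x ∈ t) (hy : y ∈ s) (hyt : y ∉ t) :
    ∃ a ∈ t, ∃ b ∈ s, b ∉ t ∧ G.Adj a b := by
  obtain ⟨p⟩ := hs ⟨x, hts hx⟩ ⟨y, hy⟩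
  obtain ⟨d, -, hd₁, hd₂⟩ := p.exists_boundary_dart {z : s | (z : V) ∈ t} hx hyt
  exact ⟨d.fst, hd₁, d.snd, d.snd.2, hd₂, d.adj⟩

theorem eq_of_preconnected_of_forall_adj {β : Type*} {s : Finset V} {g : V → β}
    (hs : (G.induce (s : Set V)).Preconnected) (hg : ∀ x ∈ s, ∀ y ∈ s, G.Adj x y → g x = g y)
    {x y : V} (hx : x ∈ s) (hy : y ∈ s) : g x = g y := by
  classical
  by_contra hxy
  obtain ⟨a, ha, b, hb, hbt, hab⟩ := exists_adj_of_preconnected hs (t := {z ∈ s | g z = g x})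
    (filter_subset _ _) (mem_filter.mpr ⟨hx, rfl⟩) hy (by simp [Ne.symm hxy])
  rw [mem_filter] at ha hbt
  exact hbt ⟨hb, (hg a ha.1 b hb hab).symm.trans ha.2⟩

theorem exists_adj_adj_not_adj {s : Set V} (hs : (G.induce s).Preconnected)
    (hK : ¬ G.IsClique s) :
    ∃ p ∈ s, ∃ q ∈ s, ∃ r ∈ s, p ≠ q ∧ ¬ G.Adj p q ∧ G.Adj r p ∧ G.Adj r q := by
  by_contra! h
  refine hK fun x hx y hy hxy => ?_
  suffices ∀ z : s, Relation.ReflTransGen (G.induce s).Adj ⟨x, hx⟩ z → x = z ∨ G.Adj x z from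
    (this ⟨y, hy⟩ ((reachable_iff_reflTransGen _ _).mp (hs _ _))).resolve_left hxy
  intro z hz
  induction hz with
  | refl => exact Or.inl rfl
  | @tail b z _ hbz ih =>
    rcases ih with hxb | hxb
    · exact Or.inr (hxb ▸ hbz)
    · by_cases hxz : x = z
      · exact Or.inl hxz
      · exact Or.inr (by_contra fun hn => h x hx z z.2 b b.2 hxz hn hxb.symm hbz)

theorem connected_induce_image_Ico {f : ℕ → V} (hf : ∀ i, G.Adj (f i) (f (i + 1))) {a b : ℕ}
    (hab : a < b) : (G.induce (f '' Set.Ico a b)).Connected := by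
  induction b, hab using Nat.le_induction with
  | base =>
    rw [show Set.Ico a (a + 1) = {a} by ext; simp; omega, Set.image_singleton]
    exact Connected.of_subsingleton
  | succ b hab ih =>
    have hb : b - 1 + 1 = b := by omega
    have h := connected_induce_union ih.preconnected Connected.of_subsingleton.preconnected
      (Set.mem_image_of_mem f (Set.mem_Ico.mpr ⟨by omega, by omega⟩))
      (Set.mem_singleton (f b)) (hb ▸ hf (b - 1))
    rwa [show Set.Ico a (b + 1) = Set.Ico a b ∪ {b} by ext; simp; omega, Set.image_union,
      Set.image_singleton]

def ListColorableOn (G : SimpleGraph V) (s : Finset V) (A : V → Finset α) : Prop :=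
  ∃ f : V → α, (∀ x ∈ s, f x ∈ A x) ∧ ∀ x ∈ s, ∀ y ∈ s, G.Adj x y → f x ≠ f y

theorem listColorableOn_of_colorable [Nonempty α] {s : Finset V} {A : V → Finset α}
    {L : Finset α} (hA : ∀ x ∈ s, A x = L) (h : (G.induce (s : Set V)).Colorable #L) :
    G.ListColorableOn s A := by
  classical
  obtain ⟨C⟩ := h
  refine ⟨fun x => if hx : x ∈ s then (L.equivFin.symm (C ⟨x, hx⟩) : α)
    else Classical.arbitrary α, fun x hx => ?_, fun x hx y hy hxy heq => ?_⟩
  · simp [hx, hA x hx]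
  · simp only [hx, hy, dite_true] at heq
    exact C.valid (show (G.induce (s : Set V)).Adj ⟨x, hx⟩ ⟨y, hy⟩ from hxy)
      (L.equivFin.symm.injective (Subtype.ext heq))

section ListColoring

variable [DecidableEq V] [DecidableRel G.Adj] {s P : Finset V} {A : V → Finset α}

theorem ListColorableOn.insert [DecidableEq α] (h : G.ListColorableOn s A) {x : V}
    (hlt : #{y ∈ s | G.Adj x y} < #(A x)) : G.ListColorableOn (insert x s) A := by
  obtain ⟨f, hfA, hf⟩ := h
  obtain ⟨a, haA, ha⟩ := exists_mem_notMem_of_card_lt_card (card_image_le.trans_lt hlt)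
  have hfree : ∀ y ∈ s, G.Adj x y → f y ≠ a := fun y hy hxy hya =>
    ha (mem_image.mpr ⟨y, mem_filter.mpr ⟨hy, hxy⟩, hya⟩)
  refine ⟨Function.update f x a, fun z hz => ?_, fun z hz w hw hzw => ?_⟩
  · rcases eq_or_ne z x with rfl | hzx
    · simpa using haA
    · simpa [hzx] using hfA z ((mem_insert.mp hz).resolve_left hzx)
  · rcases eq_or_ne z x with rfl | hzx
    · simpa [hzw.ne'] using (hfree w ((mem_insert.mp hw).resolve_left hzw.ne') hzw).symm
    rcases eq_or_ne w x with rfl | hwx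
    · simpa [hzx] using hfree z ((mem_insert.mp hz).resolve_left hzx) hzw.symm
    simpa [hzx, hwx] using
      hf z ((mem_insert.mp hz).resolve_left hzx) w ((mem_insert.mp hw).resolve_left hwx) hzw

theorem listColorableOn_of_forall_exists_lt [Nonempty α] [DecidableEq α]
    (h : ∀ t ⊆ s, t.Nonempty → ∃ x ∈ t, #{y ∈ t | G.Adj x y} < #(A x)) :
    G.ListColorableOn s A := by
  induction s using Finset.strongInduction with
  | H s ih =>
    obtain rfl | hs := s.eq_empty_or_nonempty
    · exact ⟨fun _ => Classical.arbitrary α, by simp, by simp⟩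
    obtain ⟨x, hx, hlt⟩ := h s subset_rfl hs
    have hcol := ih (s.erase x) (erase_ssubset hx) fun t ht => h t (ht.trans (erase_subset x s))
    rw [← insert_erase hx]
    exact hcol.insert ((card_le_card (filter_subset_filter _ (erase_subset x s))).trans_lt hlt)

theorem listColorableOn_of_preconnected [Nonempty α] [DecidableEq α]
    (hs : (G.induce (s : Set V)).Preconnected) (hA : ∀ x ∈ s, #{y ∈ s | G.Adj x y} ≤ #(A x))
    {u : V} (hu : u ∈ s) (hlt : #{y ∈ s | G.Adj u y} < #(A u)) : G.ListColorableOn s A := by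
  refine listColorableOn_of_forall_exists_lt fun t hts ⟨x, hx⟩ => ?_
  by_cases hut : u ∈ t
  · exact ⟨u, hut, (card_le_card (filter_subset_filter _ hts)).trans_lt hlt⟩
  obtain ⟨a, ha, b, hb, hbt, hab⟩ := exists_adj_of_preconnected hs hts hx hu hut
  refine ⟨a, ha, (card_lt_card ?_).trans_le (hA a (hts ha))⟩
  exact (ssubset_iff_of_subset (filter_subset_filter _ hts)).mpr
    ⟨b, mem_filter.mpr ⟨hb, hab⟩, fun hbt' => hbt (mem_filter.mp hbt').1⟩

def precolorLists [DecidableEq α] (G : SimpleGraph V) [DecidableRel G.Adj] (P : Finset V)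
    (c : α) (A : V → Finset α) (z : V) : Finset α :=
  if ∃ p ∈ P, G.Adj p z then (A z).erase c else A z

theorem ListColorableOn.of_precolor [DecidableEq α] {c : α} (hc : ∀ p ∈ P, c ∈ A p)
    (hP : ∀ p ∈ P, ∀ q ∈ P, ¬ G.Adj p q)
    (h : G.ListColorableOn (s \ P) (G.precolorLists P c A)) : G.ListColorableOn s A := by
  obtain ⟨f, hfA, hf⟩ := h
  have hsub : ∀ z ∈ s \ P, f z ∈ A z := fun z hz => by
    have := hfA z hz
    unfold precolorLists at this
    split_ifs at this
    exacts [mem_of_mem_erase this, this]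
  have hne : ∀ p ∈ P, ∀ z ∈ s \ P, G.Adj p z → f z ≠ c := fun p hp z hz hpz => by
    have := hfA z hz
    rw [precolorLists, if_pos ⟨p, hp, hpz⟩] at this
    exact ne_of_mem_erase this
  refine ⟨fun z => if z ∈ P then c else f z, fun z hz => ?_, fun z hz w hw hzw => ?_⟩
  · by_cases hzP : z ∈ P
    · simpa [hzP] using hc z hzP
    · simpa [hzP] using hsub z (mem_sdiff.mpr ⟨hz, hzP⟩)
  by_cases hzP : z ∈ P <;> by_cases hwP : w ∈ P
  · exact absurd hzw (hP z hzP w hwP)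
  · simpa [hzP, hwP] using (hne z hzP w (mem_sdiff.mpr ⟨hw, hwP⟩) hzw).symm
  · simpa [hzP, hwP] using hne w hwP z (mem_sdiff.mpr ⟨hz, hzP⟩) hzw.symm
  · simpa [hzP, hwP] using hf z (mem_sdiff.mpr ⟨hz, hzP⟩) w (mem_sdiff.mpr ⟨hw, hwP⟩) hzw

theorem card_filter_adj_sdiff_add (hPs : P ⊆ s) (z : V) :
    #{y ∈ s \ P | G.Adj z y} + #{y ∈ P | G.Adj z y} = #{y ∈ s | G.Adj z y} := by
  rw [← card_sdiff_add_card_eq_card (filter_subset_filter _ hPs)]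
  congr 2
  ext y
  simp only [mem_sdiff, mem_filter]
  tauto

theorem card_filter_adj_sdiff_le_card_precolorLists [DecidableEq α] {c : α} (hPs : P ⊆ s)
    {z : V} (hz : #{y ∈ s | G.Adj z y} ≤ #(A z)) :
    #{y ∈ s \ P | G.Adj z y} ≤ #(G.precolorLists P c A z) := by
  have hsplit := card_filter_adj_sdiff_add (G := G) hPs z
  unfold precolorLists
  split_ifs with hzP
  · obtain ⟨p, hp, hpz⟩ := hzP
    have : 0 < #{y ∈ P | G.Adj z y} := card_pos.mpr ⟨p, mem_filter.mpr ⟨hp, hpz.symm⟩⟩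
    have := pred_card_le_card_erase (s := A z) (a := c)
    omega
  · omega

theorem listColorableOn_of_adj [Nonempty α] [DecidableEq α] {x y : V} {c : α}
    (hs : (G.induce ↑(s \ {x})).Preconnected) (hA : ∀ z ∈ s, #{w ∈ s | G.Adj z w} ≤ #(A z))
    (hx : x ∈ s) (hy : y ∈ s) (hxy : G.Adj x y) (hcx : c ∈ A x) (hcy : c ∉ A y) :
    G.ListColorableOn s A := by
  have hxs : {x} ⊆ s := singleton_subset_iff.mpr hx
  refine ListColorableOn.of_precolor (P := {x}) (c := c) (by simpa) (by simp) <|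
    listColorableOn_of_preconnected hs
      (fun z hz => card_filter_adj_sdiff_le_card_precolorLists hxs (hA z (mem_sdiff.mp hz).1))
      (mem_sdiff.mpr ⟨hy, by simpa using hxy.ne'⟩) ?_
  rw [precolorLists, if_pos ⟨x, mem_singleton_self x, hxy⟩, erase_eq_of_notMem hcy]
  have := card_filter_adj_sdiff_add (G := G) hxs y
  have : #{w ∈ ({x} : Finset V) | G.Adj y w} = 1 := by
    rw [filter_singleton, if_pos hxy.symm, card_singleton]
  have := hA y hy
  omega

theorem listColorableOn_of_common_neighbor [Nonempty α] [DecidableEq α] {u w r : V} {c : α}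
    (hs : (G.induce ↑(s \ {u, w})).Preconnected) (hA : ∀ z ∈ s, #{y ∈ s | G.Adj z y} ≤ #(A z))
    (hu : u ∈ s) (hw : w ∈ s) (hr : r ∈ s) (huw : u ≠ w) (hnadj : ¬ G.Adj u w)
    (hru : G.Adj r u) (hrw : G.Adj r w) (hcu : c ∈ A u) (hcw : c ∈ A w) :
    G.ListColorableOn s A := by
  have hPs : {u, w} ⊆ s := insert_subset hu (singleton_subset_iff.mpr hw)
  refine ListColorableOn.of_precolor (P := {u, w}) (c := c) (by simp [hcu, hcw])
    (by simp [hnadj, mt G.adj_symm hnadj]) <|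
    listColorableOn_of_preconnected hs
      (fun z hz => card_filter_adj_sdiff_le_card_precolorLists hPs (hA z (mem_sdiff.mp hz).1))
      (mem_sdiff.mpr ⟨hr, by simp [hru.ne, hrw.ne]⟩) ?_
  rw [precolorLists, if_pos ⟨u, mem_insert_self u {w}, hru.symm⟩]
  have := card_filter_adj_sdiff_add (G := G) hPs r
  have : #{y ∈ ({u, w} : Finset V) | G.Adj r y} = 2 := by
    rw [filter_true_of_mem (by simp [hru, hrw])]
    exact card_pair huw
  have := pred_card_le_card_erase (s := A r) (a := c)
  have := hA r hr
  omega

end ListColoring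

namespace Walk

variable {u : V}

def cycleVert (c : G.Walk u u) (i : ℕ) : V := c.getVert (i % c.length)

variable {c : G.Walk u u}

@[simp]
theorem cycleVert_add_length (i : ℕ) : c.cycleVert (i + c.length) = c.cycleVert i := by
  simp [cycleVert]

theorem cycleVert_mem_support (c : G.Walk u u) (i : ℕ) : c.cycleVert i ∈ c.support :=
  c.getVert_mem_support _

theorem getVert_mod_length {i : ℕ} (hi : i ≤ c.length) :
    c.getVert (i % c.length) = c.getVert i := by
  rcases hi.lt_or_eq with hi | rfl
  · rw [Nat.mod_eq_of_lt hi]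
  · simp

theorem adj_cycleVert_succ (hc : ¬ c.Nil) (i : ℕ) :
    G.Adj (c.cycleVert i) (c.cycleVert (i + 1)) := by
  have hlt := Nat.mod_lt i (not_nil_iff_lt_length.mp hc)
  rw [cycleVert, cycleVert, ← Nat.mod_add_mod, getVert_mod_length hlt]
  exact c.adj_getVert_succ hlt

theorem adj_cycleVert_pred (hc : ¬ c.Nil) (i : ℕ) :
    G.Adj (c.cycleVert i) (c.cycleVert (i + c.length - 1)) := by
  have hpos : 0 < c.length := not_nil_iff_lt_length.mp hc
  simpa [Nat.sub_add_cancel (show 1 ≤ i + c.length by omega)] using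
    (adj_cycleVert_succ hc (i + c.length - 1)).symm

theorem image_cycleVert_Ico (hc : ¬ c.Nil) (a : ℕ) :
    c.cycleVert '' Set.Ico a (a + c.length) = {x | x ∈ c.support} := by
  refine Set.Subset.antisymm (Set.image_subset_iff.mpr fun i _ => c.cycleVert_mem_support i)
    fun x hx => ?_
  obtain ⟨k, rfl, hk⟩ := mem_support_iff_exists_getVert.mp hx
  have : k % c.length ∈ (Ico a (a + c.length)).image (· % c.length) := by
    rw [Nat.image_Ico_mod]
    exact mem_range.mpr (Nat.mod_lt k (not_nil_iff_lt_length.mp hc))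
  obtain ⟨j, hj, hjk⟩ := mem_image.mp this
  exact ⟨j, by simpa using hj, by rw [cycleVert, hjk, getVert_mod_length hk]⟩

theorem exists_cycleVert_eq (hc : ¬ c.Nil) (a : ℕ) {x : V} (hx : x ∈ c.support) :
    ∃ i, a ≤ i ∧ i < a + c.length ∧ c.cycleVert i = x := by
  obtain ⟨i, hi, rfl⟩ : x ∈ c.cycleVert '' Set.Ico a (a + c.length) := by
    rwa [image_cycleVert_Ico hc]
  exact ⟨i, hi.1, hi.2, rfl⟩

theorem IsCycle.cycleVert_eq_iff (hc : c.IsCycle) {i j : ℕ} :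
    c.cycleVert i = c.cycleVert j ↔ i % c.length = j % c.length := by
  have hpos : 0 < c.length := not_nil_iff_lt_length.mp hc.not_nil
  refine ⟨fun h => hc.getVert_injOn' ?_ ?_ h, fun h => by rw [cycleVert, cycleVert, h]⟩
  · simpa using Nat.le_sub_one_of_lt (Nat.mod_lt i hpos)
  · simpa using Nat.le_sub_one_of_lt (Nat.mod_lt j hpos)

theorem IsCycle.cycleVert_add_eq (hc : c.IsCycle) {i j : ℕ} (h : c.cycleVert i = c.cycleVert j)
    (k : ℕ) : c.cycleVert (i + k) = c.cycleVert (j + k) :=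
  hc.cycleVert_eq_iff.mpr (Nat.ModEq.add_right k (hc.cycleVert_eq_iff.mp h))

theorem IsCycle.injOn_cycleVert_Ico (hc : c.IsCycle) (a : ℕ) :
    Set.InjOn c.cycleVert (Set.Ico a (a + c.length)) := by
  have hmod : Set.InjOn (· % c.length) (Ico a (a + c.length) : Set ℕ) :=
    injOn_of_card_image_eq (by simp [Nat.image_Ico_mod])
  intro i hi j hj h
  exact hmod (by simpa using hi) (by simpa using hj) (hc.cycleVert_eq_iff.mp h)

theorem IsCycle.cycleVert_succ_ne_pred (hc : c.IsCycle) (i : ℕ) :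
    c.cycleVert (i + 1) ≠ c.cycleVert (i + c.length - 1) := fun h => by
  have := hc.three_le_length
  have := hc.injOn_cycleVert_Ico (i + 1) (by simp; omega) (by simp; omega) h
  omega

theorem IsCycle.support_diff_image_cycleVert (hc : c.IsCycle) (a : ℕ) {T : Set ℕ}
    (hT : T ⊆ Set.Ico a (a + c.length)) :
    {x | x ∈ c.support} \ c.cycleVert '' T = c.cycleVert '' (Set.Ico a (a + c.length) \ T) := by
  rw [(hc.injOn_cycleVert_Ico a).image_sdiff, Set.inter_eq_right.mpr hT,
    image_cycleVert_Ico hc.not_nil]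

theorem IsCycle.connected_induce_support_diff_singleton (hc : c.IsCycle) {x : V}
    (hx : x ∈ c.support) : (G.induce ({y | y ∈ c.support} \ {x})).Connected := by
  obtain ⟨a, -, -, rfl⟩ := exists_cycleVert_eq hc.not_nil 0 hx
  have := hc.three_le_length
  rw [← Set.image_singleton, hc.support_diff_image_cycleVert a (by simp; omega),
    show Set.Ico a (a + c.length) \ {a} = Set.Ico (a + 1) (a + c.length) by ext; simp]
  exact connected_induce_image_Ico (adj_cycleVert_succ hc.not_nil) (by omega)

theorem IsCycle.connected_induce_support_diff_pair (hc : c.IsCycle) {a b x y : ℕ}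
    (hx : x ∈ Set.Ico (a + 1) b) (hy : y ∈ Set.Ico (b + 1) (a + c.length))
    (hxy : G.Adj (c.cycleVert x) (c.cycleVert y)) :
    (G.induce ({z | z ∈ c.support} \ {c.cycleVert a, c.cycleVert b})).Connected := by
  rw [Set.mem_Ico] at hx hy
  rw [← Set.image_pair, hc.support_diff_image_cycleVert a (by
      rintro i (rfl | rfl) <;> exact Set.mem_Ico.mpr ⟨by omega, by omega⟩),
    show Set.Ico a (a + c.length) \ {a, b} = Set.Ico (a + 1) b ∪ Set.Ico (b + 1) (a + c.length)
      by ext; simp; omega, Set.image_union]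
  have hf := adj_cycleVert_succ hc.not_nil
  exact connected_induce_union (connected_induce_image_Ico hf (by omega)).preconnected
    (connected_induce_image_Ico hf (by omega)).preconnected
    (Set.mem_image_of_mem _ (Set.mem_Ico.mpr hx)) (Set.mem_image_of_mem _ (Set.mem_Ico.mpr hy))
    hxy

section Degrees

variable [DecidableEq V] [DecidableRel G.Adj]

theorem pair_subset_filter_adj (hc : ¬ c.Nil) (i : ℕ) :
    {c.cycleVert (i + 1), c.cycleVert (i + c.length - 1)} ⊆
      {y ∈ c.support.toFinset | G.Adj (c.cycleVert i) y} := by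
  simp [insert_subset_iff, adj_cycleVert_succ hc i, adj_cycleVert_pred hc i, cycleVert_mem_support]

theorem IsCycle.two_le_card_filter_adj (hc : c.IsCycle) {x : V} (hx : x ∈ c.support) :
    2 ≤ #{y ∈ c.support.toFinset | G.Adj x y} := by
  obtain ⟨i, -, -, rfl⟩ := exists_cycleVert_eq hc.not_nil 0 hx
  exact (card_pair (hc.cycleVert_succ_ne_pred i)).ge.trans
    (card_le_card (pair_subset_filter_adj hc.not_nil i))

theorem IsCycle.eq_cycleVert_succ_of_adj (hc : c.IsCycle)
    (h : ∀ x ∈ c.support, #{y ∈ c.support.toFinset | G.Adj x y} ≤ 2) {i j : ℕ}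
    (hij : G.Adj (c.cycleVert i) (c.cycleVert j)) :
    c.cycleVert j = c.cycleVert (i + 1) ∨ c.cycleVert i = c.cycleVert (j + 1) := by
  have hpair := eq_of_subset_of_card_le (pair_subset_filter_adj hc.not_nil i)
    (by rw [card_pair (hc.cycleVert_succ_ne_pred i)]; exact h _ (c.cycleVert_mem_support _))
  have hj : c.cycleVert j ∈
      ({c.cycleVert (i + 1), c.cycleVert (i + c.length - 1)} : Finset V) := by
    rw [hpair]
    simp [hij, cycleVert_mem_support]
  rcases mem_insert.mp hj with hj | hj
  · exact Or.inl hj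
  · have := hc.three_le_length
    rw [hc.cycleVert_add_eq (mem_singleton.mp hj), Nat.sub_add_cancel (by omega),
      cycleVert_add_length]
    exact Or.inr rfl

theorem IsCycle.nonempty_iso_cycleGraph (hc : c.IsCycle)
    (h : ∀ x ∈ c.support, #{y ∈ c.support.toFinset | G.Adj x y} ≤ 2) :
    Nonempty (G.induce {x | x ∈ c.support} ≃g cycleGraph c.length) := by
  have hf := adj_cycleVert_succ hc.not_nil
  obtain ⟨m, hm⟩ : ∃ m, c.length = m + 2 := ⟨c.length - 2, by have := hc.three_le_length; omega⟩
  rw [hm]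
  let g : Fin (m + 2) → {x | x ∈ c.support} := fun i => ⟨c.cycleVert i, c.cycleVert_mem_support _⟩
  have hinj : ∀ i j : Fin (m + 2), c.cycleVert i = c.cycleVert j → i = j := fun i j h =>
    Fin.ext (hc.injOn_cycleVert_Ico 0 (by simp; omega) (by simp; omega) h)
  have hsucc : ∀ i : Fin (m + 2), c.cycleVert ↑(i + 1) = c.cycleVert (i + 1) := fun i => by
    rw [hc.cycleVert_eq_iff, Fin.val_add, Fin.val_one, hm, Nat.mod_mod]
  have hbij : Function.Bijective g := by
    refine ⟨fun i j hij => hinj i j (congrArg Subtype.val hij), fun ⟨x, hx⟩ => ?_⟩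
    obtain ⟨a, -, ha, rfl⟩ := exists_cycleVert_eq hc.not_nil 0 hx
    exact ⟨⟨a, by omega⟩, rfl⟩
  refine ⟨RelIso.symm { Equiv.ofBijective g hbij with map_rel_iff' := fun {i j} => ?_ }⟩
  change G.Adj (c.cycleVert i) (c.cycleVert j) ↔ _
  rw [cycleGraph_adj, sub_eq_iff_eq_add', sub_eq_iff_eq_add']
  constructor
  · intro hij
    rcases hc.eq_cycleVert_succ_of_adj h hij with h | h
    · exact Or.inr (hinj _ _ (h.trans (hsucc i).symm))
    · exact Or.inl (hinj _ _ (h.trans (hsucc j).symm))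
  · rintro (rfl | rfl)
    · exact hsucc j ▸ (hf j).symm
    · exact hsucc i ▸ hf i

theorem IsCycle.exists_not_adj_common_neighbor (hc : c.IsCycle)
    (h3 : ∀ x ∈ c.support, 3 ≤ #{y ∈ c.support.toFinset | G.Adj x y})
    (hK : ¬ G.IsClique {x | x ∈ c.support}) :
    ∃ p ∈ c.support, ∃ q ∈ c.support, ∃ r ∈ c.support, p ≠ q ∧ ¬ G.Adj p q ∧ G.Adj r p ∧
      G.Adj r q ∧ (G.induce ({z | z ∈ c.support} \ {p, q})).Connected := by
  have hL := hc.three_le_length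
  have hf := adj_cycleVert_succ hc.not_nil
  by_cases hchord : ∃ i, ¬ G.Adj (c.cycleVert i) (c.cycleVert (i + 2))
  · -- remove the two cycle neighbours of the middle vertex; it keeps a third neighbour on the arc
    obtain ⟨i, hi⟩ := hchord
    obtain ⟨z, hz, hzi⟩ := exists_mem_notMem_of_card_lt_card
      (s := {c.cycleVert i, c.cycleVert (i + 2)})
      (card_le_two.trans_lt (h3 _ (c.cycleVert_mem_support (i + 1))))
    rw [mem_filter, List.mem_toFinset] at hz
    obtain ⟨j, hj₁, hj₂, rfl⟩ := exists_cycleVert_eq hc.not_nil i hz.1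
    have hj₃ : j ≠ i := fun h => hzi (by simp [h])
    have hj₄ : j ≠ i + 2 := fun h => hzi (by simp [h])
    have hj₅ : j ≠ i + 1 := by rintro rfl; exact G.loopless.irrefl _ hz.2
    refine ⟨_, c.cycleVert_mem_support i, _, c.cycleVert_mem_support (i + 2), _,
      c.cycleVert_mem_support (i + 1), fun h => ?_, hi, (hf i).symm, hf (i + 1),
      hc.connected_induce_support_diff_pair (x := i + 1) (y := j) ⟨by omega, by omega⟩
        ⟨by omega, by omega⟩ hz.2⟩
    have := hc.injOn_cycleVert_Ico i (by simp; omega) (by simp; omega) h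
    omega
  · -- any induced path `p r q` works: the chord between the two cycle neighbours of `q`
    -- joins the two arcs left by removing `p` and `q`
    push Not at hchord
    obtain ⟨p, hp, q, hq, r, hr, hpq, hnpq, hrp, hrq⟩ :=
      exists_adj_adj_not_adj c.connected_induce_support.preconnected hK
    obtain ⟨a, -, -, rfl⟩ := exists_cycleVert_eq hc.not_nil 0 hp
    obtain ⟨b, hab, hba, rfl⟩ := exists_cycleVert_eq hc.not_nil a hq
    have hb₀ : b ≠ a := by rintro rfl; exact hpq rfl
    have hb₁ : b ≠ a + 1 := by rintro rfl; exact hnpq (hf a)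
    have hb₂ : b ≠ a + c.length - 1 := by
      rintro rfl; exact hnpq (adj_cycleVert_pred hc.not_nil a)
    refine ⟨_, hp, _, hq, r, hr, hpq, hnpq, hrp, hrq,
      hc.connected_induce_support_diff_pair (x := b - 1) (y := b + 1) ⟨by omega, by omega⟩
        ⟨by omega, by omega⟩ ?_⟩
    simpa [show b - 1 + 2 = b + 1 by omega] using hchord (b - 1)

theorem IsCycle.listColorableOn_of_forall_eq [DecidableEq α] [Nonempty α] (hc : c.IsCycle)
    {A : V → Finset α} {L : Finset α} (hL : ∀ x ∈ c.support.toFinset, A x = L)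
    (hdeg : ∀ x ∈ c.support, #{y ∈ c.support.toFinset | G.Adj x y} = #L)
    (hK : ¬ G.IsClique {x | x ∈ c.support}) (hO : ¬ G.InducedOddCycle {x | x ∈ c.support}) :
    G.ListColorableOn c.support.toFinset A := by
  have hS : (c.support.toFinset : Set V) = {x | x ∈ c.support} := by ext; simp
  have h2 := hdeg u c.start_mem_support ▸ hc.two_le_card_filter_adj c.start_mem_support
  rcases h2.eq_or_lt with h2 | h3
  · obtain ⟨e⟩ := hc.nonempty_iso_cycleGraph fun x hx => (hdeg x hx).trans_le h2.ge
    rcases Nat.even_or_odd c.length with heven | hodd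
    · refine listColorableOn_of_colorable hL ?_
      rw [hS, ← h2]
      simpa using (cycleGraph.bicoloring_of_even _ heven).colorable.of_hom e.toHom
    · exact absurd ⟨c.length, hodd, ⟨e⟩⟩ hO
  · obtain ⟨p, hp, q, hq, r, hr, hpq, hnpq, hrp, hrq, hconn⟩ :=
      hc.exists_not_adj_common_neighbor (fun x hx => hdeg x hx ▸ h3) hK
    obtain ⟨col, hcol⟩ := card_pos.mp (h3.trans' two_pos)
    have hp' := List.mem_toFinset.mpr hp
    have hq' := List.mem_toFinset.mpr hq
    refine listColorableOn_of_common_neighbor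
      (by rw [coe_sdiff, coe_pair, hS]; exact hconn.preconnected)
      (fun z hz => (hdeg z (List.mem_toFinset.mp hz)).trans_le (congrArg card (hL z hz)).ge)
      hp' hq' (List.mem_toFinset.mpr hr) hpq hnpq hrp hrq (hL p hp' ▸ hcol) (hL q hq' ▸ hcol)

theorem IsCycle.listColorableOn_support [DecidableEq α] (hc : c.IsCycle) {A : V → Finset α}
    (hA : ∀ x ∈ c.support, #{y ∈ c.support.toFinset | G.Adj x y} ≤ #(A x))
    (hK : ¬ G.IsClique {x | x ∈ c.support}) (hO : ¬ G.InducedOddCycle {x | x ∈ c.support}) :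
    G.ListColorableOn c.support.toFinset A := by
  have hS : (c.support.toFinset : Set V) = {x | x ∈ c.support} := by ext; simp
  have hconn : (G.induce (c.support.toFinset : Set V)).Preconnected := by
    rw [hS]
    exact c.connected_induce_support.preconnected
  have hA' : ∀ x ∈ c.support.toFinset, #{y ∈ c.support.toFinset | G.Adj x y} ≤ #(A x) :=
    fun x hx => hA x (List.mem_toFinset.mp hx)
  obtain ⟨col, -⟩ := card_pos.mp
    (((hc.two_le_card_filter_adj c.start_mem_support).trans (hA u c.start_mem_support)).trans_lt'
      two_pos)
  have : Nonempty α := ⟨col⟩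
  by_cases hsur : ∃ x ∈ c.support.toFinset, #{y ∈ c.support.toFinset | G.Adj x y} < #(A x)
  · obtain ⟨x, hx, hlt⟩ := hsur
    exact listColorableOn_of_preconnected hconn hA' hx hlt
  push Not at hsur
  by_cases hdiff : ∃ x ∈ c.support.toFinset, ∃ y ∈ c.support.toFinset, G.Adj x y ∧ ¬ A x ⊆ A y
  · obtain ⟨x, hx, y, hy, hxy, hxy'⟩ := hdiff
    obtain ⟨col, hcx, hcy⟩ := not_subset.mp hxy'
    refine listColorableOn_of_adj ?_ hA' hx hy hxy hcx hcy
    rw [coe_sdiff, coe_singleton, hS]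
    exact (hc.connected_induce_support_diff_singleton (List.mem_toFinset.mp hx)).preconnected
  push Not at hdiff
  have hL : ∀ x ∈ c.support.toFinset, A x = A u := fun x hx =>
    eq_of_preconnected_of_forall_adj hconn
      (fun a ha b hb hab => (hdiff a ha b hb hab).antisymm (hdiff b hb a ha hab.symm)) hx
      (List.mem_toFinset.mpr c.start_mem_support)
  refine hc.listColorableOn_of_forall_eq hL (fun x hx => ?_) hK hO
  have hx' := List.mem_toFinset.mpr hx
  rw [← hL x hx']
  exact (hA x hx).antisymm (hsur x hx')

end Degrees

end Walk

section PartialColoring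

variable [Fintype V] [DecidableRel G.Adj] [DecidableEq V] [Fintype α] [DecidableEq α]

def freeColors (G : SimpleGraph V) [DecidableRel G.Adj] (φ : V → Option α) (s : Finset V)
    (u : V) : Finset α :=
  {a | some a ∉ (G.neighborFinset u \ s).image φ}

theorem card_filter_adj_le_card_freeColors (φ : V → Option α) (s : Finset V) {u : V}
    (hu : G.degree u ≤ Fintype.card α) : #{y ∈ s | G.Adj u y} ≤ #(G.freeColors φ s u) := by
  set F := (G.neighborFinset u \ s).image φ
  have h₁ : #{a : α | some a ∈ F} ≤ #F :=
    card_le_card_of_injOn some (fun a ha => (mem_filter.mp ha).2) (Option.some_injective α).injOn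
  have h₂ : #{a : α | some a ∈ F} + #(G.freeColors φ s u) = Fintype.card α :=
    card_filter_add_card_filter_not _
  have h₃ : #F ≤ #(G.neighborFinset u \ s) := card_image_le
  have h₄ : #(G.neighborFinset u \ s) + #{y ∈ s | G.Adj u y} = G.degree u := by
    rw [← card_neighborFinset_eq_degree, ← card_sdiff_add_card_inter (G.neighborFinset u) s]
    congr 2
    ext
    simp [and_comm]
  omega

theorem exists_extension_of_listColorableOn {φ : V → Option α}
    (hφ : ∀ a b, G.Adj a b → φ a ≠ none → φ a ≠ φ b) {s : Finset V}
    (h : G.ListColorableOn s (G.freeColors φ s)) :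
    ∃ φ' : V → Option α, (∀ a b, G.Adj a b → φ' a ≠ none → φ' a ≠ φ' b) ∧
      (∀ u ∈ s, φ' u ≠ none) ∧ ∀ u, u ∉ s → φ' u = φ u := by
  obtain ⟨f, hfA, hf⟩ := h
  have hfree : ∀ x ∈ s, ∀ w, G.Adj x w → w ∉ s → φ w ≠ some (f x) := fun x hx w hxw hw hφw => by
    have := hfA x hx
    simp only [freeColors, mem_filter, mem_univ, true_and, mem_image, not_exists, not_and] at this
    exact this w (mem_sdiff.mpr ⟨(G.mem_neighborFinset x w).mpr hxw, hw⟩) hφw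
  refine ⟨fun z => if z ∈ s then some (f z) else φ z, fun a b hab ha => ?_,
    fun u hu => by simp [hu], fun u hu => by simp [hu]⟩
  by_cases has : a ∈ s <;> by_cases hbs : b ∈ s <;>
    simp only [has, hbs, if_true, if_false] at ha ⊢
  · exact fun h => hf a has b hbs hab (Option.some_injective α h)
  · exact (hfree a has b hab hbs).symm
  · exact hfree b hbs a hab.symm has
  · exact hφ a b hab ha

end PartialColoring

end SimpleGraph

theorem color_removable_cycle_general {V : Type*} [Fintype V] (G : SimpleGraph V)
    [DecidableRel G.Adj] (Δ : ℕ) {v : V} (c : G.Walk v v) (hc : c.IsCycle)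
    (hrm : c.IsRemovable)
    (hdeg : ∀ u ∈ c.support, G.degree u ≤ Δ)
    (φ : V → Option (Fin Δ))
    (hφ : ∀ a b, G.Adj a b → φ a ≠ none → φ a ≠ φ b) :
    ∃ φ' : V → Option (Fin Δ),
      (∀ a b, G.Adj a b → φ' a ≠ none → φ' a ≠ φ' b) ∧
      (∀ u ∈ c.support, φ' u ≠ none) ∧
      (∀ u, u ∉ c.support → φ' u = φ u) := by
  classical
  have hcol := hc.listColorableOn_support (A := G.freeColors φ c.support.toFinset)
    (fun x hx => card_filter_adj_le_card_freeColors φ _ (by simpa using hdeg x hx)) hrm.1 hrm.2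
  simpa using exists_extension_of_listColorableOn hφ hcol

/-- A removable cycle all of whose vertices have degree at most Δ and are uncolored
under a partial proper Δ-coloring can be colored, extending the coloring. -/
theorem color_removable_cycle {V : Type*} [Fintype V] (G : SimpleGraph V)
    [DecidableRel G.Adj] (Δ : ℕ) {v : V} (c : G.Walk v v) (hc : c.IsCycle)
    (hrm : c.IsRemovable)
    (hdeg : ∀ u ∈ c.support, G.degree u ≤ Δ)
    (φ : V → Option (Fin Δ))
    (hφ : ∀ a b, G.Adj a b → φ a ≠ none → φ a ≠ φ b)
    (hunc : ∀ u ∈ c.support, φ u = none) :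
    ∃ φ' : V → Option (Fin Δ),
      (∀ a b, G.Adj a b → φ' a ≠ none → φ' a ≠ φ' b) ∧
      (∀ u ∈ c.support, φ' u ≠ none) ∧
      (∀ u, u ∉ c.support → φ' u = φ u) :=
  color_removable_cycle_general G Δ c hc hrm hdeg φ hφ
end

section
/- Let H be a planar graph containing no removable cycle of length at most 10, and let K be a 4-clique in H. Then every simple cycle of length 5 in H is edge-disjoint from K. -/
open SimpleGraph

/-!
Let `xy` be an edge of the 5-cycle `C` lying in the 4-clique `K`. Then `C` is not removable, and
as planar graphs contain no `K₅` its vertex set must induce a chordless 5-cycle.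
A chordless cycle of length at least 4 has no triangles, so a third vertex `z` of `K` lies off `C`.
Replacing the edge `xy` of `C` by the detour `x z y` gives a 6-cycle, which again cannot induce a
complete graph, but cannot induce an odd cycle either: it has six vertices.
-/

namespace SimpleGraph

variable {V W : Type*} {G : SimpleGraph V}

theorem IsContained.hasMinor {H : SimpleGraph W} (h : H ⊑ G) : G.HasMinor H := by
  obtain ⟨f⟩ := h
  refine ⟨fun w ↦ {f w}, fun w ↦ Set.singleton_nonempty _, fun w ↦ ?_,
    fun w₁ w₂ hne ↦ Set.disjoint_singleton.2 (f.injective.ne hne),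
    fun w₁ w₂ hadj ↦ ⟨f w₁, rfl, f w₂, rfl, f.toHom.map_adj hadj⟩⟩
  rw [induce_singleton_eq_top]
  exact connected_top

theorem IsPlanar.cliqueFree_five (h : G.IsPlanar) : G.CliqueFree 5 := by
  by_contra hK
  exact h.1 ((not_cliqueFree_iff_top_isContained 5).1 hK).hasMinor

theorem CliqueFree.not_inducedComplete {n : ℕ} {S : Set V} (h : G.CliqueFree n)
    (hS : n ≤ S.ncard) : ¬ G.InducedComplete S := by
  intro hcl
  obtain ⟨t, htS, rfl⟩ := Set.exists_subset_card_eq hS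
  rcases t.ncard.eq_zero_or_pos with h0 | hpos
  · exact not_cliqueFree_zero (h0 ▸ h)
  have ht := Set.finite_of_ncard_pos hpos
  have hclique : G.IsClique t := fun x hx y hy hxy ↦ hcl x (htS hx) y (htS hy) hxy
  exact h ht.toFinset ⟨by rwa [ht.coe_toFinset], (Set.ncard_eq_toFinset_card t ht).symm⟩

theorem cycleGraph_cliqueFree_three {n : ℕ} (hn : 4 ≤ n) : (cycleGraph n).CliqueFree 3 := by
  obtain ⟨n, rfl⟩ : ∃ m, n = m + 4 := ⟨n - 4, by omega⟩
  have h1 : (1 : Fin (n + 4)) ≠ 0 := Fin.zero_lt_one.ne'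
  have h3 : (3 : Fin (n + 4)) ≠ 0 := by
    simp [Fin.ext_iff, Nat.mod_eq_of_lt (show 3 < n + 4 by omega)]
  intro s hs
  obtain ⟨a, b, c, hab, hac, hbc, rfl⟩ := is3Clique_iff.1 hs
  rw [cycleGraph_adj] at hab hac hbc
  -- `b - a`, `c - a` and `c - b` would all be `±1`, forcing `1 = 0` or `3 = 0`
  grind

theorem ncard_eq_of_induce_iso_cycleGraph {S : Set V} {n : ℕ} (e : G.induce S ≃g cycleGraph n) :
    S.ncard = n := by
  rw [← Nat.card_coe_set_eq, Nat.card_congr e.toEquiv, Nat.card_eq_fintype_card,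
    Fintype.card_fin]

theorem InducedOddCycle.odd_ncard {S : Set V} (h : G.InducedOddCycle S) : Odd S.ncard := by
  obtain ⟨n, hn, ⟨e⟩⟩ := h
  rwa [ncard_eq_of_induce_iso_cycleGraph e]

theorem InducedOddCycle.notMem_of_adj_of_adj {S : Set V} {x y z : V} (h : G.InducedOddCycle S)
    (hS : 4 ≤ S.ncard) (hx : x ∈ S) (hy : y ∈ S) (hxy : G.Adj x y) (hxz : G.Adj x z)
    (hyz : G.Adj y z) : z ∉ S := by
  classical
  obtain ⟨n, -, ⟨e⟩⟩ := h
  rw [ncard_eq_of_induce_iso_cycleGraph e] at hS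
  intro hz
  exact (cycleGraph_cliqueFree_three hS).comap e.isContained {⟨x, hx⟩, ⟨y, hy⟩, ⟨z, hz⟩}
    (is3Clique_triple_iff.2 ⟨by exact hxy, by exact hxz, by exact hyz⟩)

namespace Walk

theorem IsPath.ncard_support {u v : V} {p : G.Walk u v} (hp : p.IsPath) :
    {x | x ∈ p.support}.ncard = p.length + 1 := by
  classical
  rw [← List.coe_toFinset, Set.ncard_coe_finset, List.toFinset_card_of_nodup hp.support_nodup,
    length_support]

theorem IsCycle.ncard_support {u : V} {c : G.Walk u u} (hc : c.IsCycle) :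
    {x | x ∈ c.support}.ncard = c.length := by
  have hsupp : {x | x ∈ c.support} = {x | x ∈ c.tail.support} := by
    ext x
    rw [Set.mem_ofPred_eq, Set.mem_ofPred_eq, ← cons_support_tail hc.not_nil, List.mem_cons,
      or_iff_right_of_imp fun h ↦ h ▸ c.tail.end_mem_support]
  rw [hsupp, hc.isPath_tail.ncard_support, length_tail_add_one hc.not_nil]

theorem IsCycle.exists_isPath_of_snd {u : V} {c : G.Walk u u} (hc : c.IsCycle) :
    ∃ p : G.Walk c.snd u, p.IsPath ∧ p.length + 1 = c.length ∧ p.support ⊆ c.support :=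
  ⟨c.tail, hc.isPath_tail, length_tail_add_one hc.not_nil, by
    rw [support_tail_of_not_nil _ hc.not_nil]; exact List.tail_subset _⟩

theorem IsCycle.exists_isPath_of_mem_edges {u x y : V} {c : G.Walk u u} (hc : c.IsCycle)
    (he : s(x, y) ∈ c.edges) :
    ∃ p : G.Walk y x, p.IsPath ∧ p.length + 1 = c.length ∧ p.support ⊆ c.support := by
  classical
  have hx : x ∈ c.support := c.fst_mem_support_of_mem_edges he
  suffices ∃ p : G.Walk y x, p.IsPath ∧ p.length + 1 = (c.rotate x hx).length ∧
      p.support ⊆ (c.rotate x hx).support by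
    obtain ⟨p, hp, hlen, hsupp⟩ := this
    exact ⟨p, hp, hlen.trans (length_rotate ..), fun w hw ↦ (mem_support_rotate_iff ..).1 (hsupp hw)⟩
  have hc' := hc.rotate hx
  -- in a cycle based at `x`, the two cycle-neighbours of `x` are its second and penultimate vertex
  have hy : y ∈ (c.rotate x hx).toSubgraph.neighborSet x := by
    rw [Subgraph.mem_neighborSet, adj_toSubgraph_iff_mem_edges]
    exact (rotate_edges c x hx).mem_iff.2 he
  rw [hc'.neighborSet_toSubgraph_endpoint] at hy
  rcases hy with rfl | rfl
  · exact hc'.exists_isPath_of_snd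
  · have h := hc'.reverse.exists_isPath_of_snd
    rw [snd_reverse, length_reverse, support_reverse] at h
    simpa only [List.subset_def, List.mem_reverse] using h

theorem IsCycle.exists_isCycle_length_succ {u x y z : V} {c : G.Walk u u} (hc : c.IsCycle)
    (he : s(x, y) ∈ c.edges) (hz : z ∉ c.support) (hxz : G.Adj x z) (hzy : G.Adj z y) :
    ∃ c' : G.Walk x x, c'.IsCycle ∧ c'.length = c.length + 1 := by
  obtain ⟨p, hp, hlen, hsupp⟩ := hc.exists_isPath_of_mem_edges he
  have hzp : z ∉ p.support := fun h ↦ hz (hsupp h)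
  refine ⟨cons hxz (cons hzy p), ?_, by simp [← hlen]⟩
  rw [cons_isCycle_iff, cons_isPath_iff, edges_cons, List.mem_cons, Sym2.eq_iff]
  refine ⟨⟨hp, hzp⟩, ?_⟩
  rintro ((⟨rfl, -⟩ | ⟨rfl, -⟩) | h)
  · exact hxz.ne rfl
  · exact (c.adj_of_mem_edges he).ne rfl
  · exact hzp (p.snd_mem_support_of_mem_edges h)

end Walk

theorem IsPlanar.inducedOddCycle_of_not_isRemovable {u : V} {c : G.Walk u u} (hG : G.IsPlanar)
    (hc : c.IsCycle) (hlen : 5 ≤ c.length) (hrem : ¬ c.IsRemovable) :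
    G.InducedOddCycle {x | x ∈ c.support} := by
  rw [Walk.IsRemovable, not_and_or, not_not, not_not] at hrem
  exact hrem.resolve_left (hG.cliqueFree_five.not_inducedComplete (hc.ncard_support ▸ hlen))

end SimpleGraph

theorem five_cycle_clique_edge_disjoint_general {V : Type*} (H : SimpleGraph V)
    (hpl : H.IsPlanar)
    (hrem : ∀ (w : V) (c : H.Walk w w), c.IsCycle → c.length ≤ 10 → ¬ c.IsRemovable)
    (K : Finset V) (hK4 : K.card = 4) (hKcl : ∀ x ∈ K, ∀ y ∈ K, x ≠ y → H.Adj x y)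
    {a : V} (c : H.Walk a a) (hc : c.IsCycle) (hlen : c.length = 5) :
    ∀ x ∈ K, ∀ y ∈ K, s(x, y) ∉ c.edges := by
  classical
  intro x hx y hy hxy
  obtain ⟨z, hzK, hz⟩ := Finset.exists_mem_notMem_of_card_lt_card (s := {x, y}) (t := K)
    (Finset.card_le_two.trans_lt (by omega))
  rw [Finset.mem_insert, Finset.mem_singleton, not_or] at hz
  have hxz := hKcl x hx z hzK (Ne.symm hz.1)
  have hzy := hKcl z hzK y hy hz.2
  have hodd := hpl.inducedOddCycle_of_not_isRemovable hc (by omega) (hrem a c hc (by omega))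
  have hzc : z ∉ c.support :=
    hodd.notMem_of_adj_of_adj (by rw [hc.ncard_support]; omega)
      (c.fst_mem_support_of_mem_edges hxy) (c.snd_mem_support_of_mem_edges hxy)
      (c.adj_of_mem_edges hxy) hxz hzy.symm
  obtain ⟨c', hc', hlen'⟩ := hc.exists_isCycle_length_succ hxy hzc hxz hzy
  have h6 := (hpl.inducedOddCycle_of_not_isRemovable hc' (by omega)
    (hrem x c' hc' (by omega))).odd_ncard
  rw [hc'.ncard_support, hlen', hlen] at h6
  exact absurd h6 (by decide)

/-- In a planar graph with no removable cycle of length at most 10, every simple cycle of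
length 5 is edge-disjoint from every 4-clique. -/
theorem five_cycle_clique_edge_disjoint {V : Type*} [DecidableEq V] (H : SimpleGraph V)
    (hpl : H.IsPlanar)
    (hrem : ∀ (w : V) (c : H.Walk w w), c.IsCycle → c.length ≤ 10 → ¬ c.IsRemovable)
    (K : Finset V) (hK4 : K.card = 4) (hKcl : ∀ x ∈ K, ∀ y ∈ K, x ≠ y → H.Adj x y)
    {a : V} (c : H.Walk a a) (hc : c.IsCycle) (hlen : c.length = 5) :
    ∀ x ∈ K, ∀ y ∈ K, s(x, y) ∉ c.edges :=
  five_cycle_clique_edge_disjoint_general H hpl hrem K hK4 hKcl c hc hlen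
end

section
/- Let H be a planar graph containing no removable cycle of length at most 10. Then any two distinct 4-cliques of H are edge-disjoint. -/
open SimpleGraph

lemma singleton_induce_connected {V : Type*} (G : SimpleGraph V) (v : V) :
    (G.induce ({v} : Set V)).Connected := by
  rw [connected_iff]
  refine ⟨fun a b => ?_, ⟨⟨v, rfl⟩⟩⟩
  rw [Subsingleton.elim a b]

lemma K5_minor_of_clique {V : Type*} (G : SimpleGraph V) (f : Fin 5 → V)
    (hadj : ∀ i j, i ≠ j → G.Adj (f i) (f j)) :
    G.HasMinor (completeGraph (Fin 5)) := by
  refine ⟨fun i => {f i}, fun i => ⟨f i, rfl⟩, fun i => singleton_induce_connected G (f i),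
    ?_, ?_⟩
  · intro i j hij
    simp only [Set.disjoint_singleton_left, Set.mem_singleton_iff]
    exact fun h => (hadj i j hij).ne h
  · intro i j hij
    exact ⟨f i, rfl, f j, rfl, hadj i j hij⟩

lemma adj_of_cycle4 {V : Type*} [DecidableEq V] {G : SimpleGraph V}
    (hrem : ∀ (w : V) (c : G.Walk w w), c.IsCycle → c.length ≤ 10 → ¬ c.IsRemovable)
    {a x c y : V}
    (hax : a ≠ x) (hac : a ≠ c) (hay : a ≠ y) (hxc : x ≠ c) (hxy : x ≠ y) (hcy : c ≠ y)
    (Hax : G.Adj a x) (Hxc : G.Adj x c) (Hcy : G.Adj c y) (Hya : G.Adj y a) :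
    G.Adj a c := by
  by_contra hAC
  set w : G.Walk a a :=
    Walk.cons Hax (Walk.cons Hxc (Walk.cons Hcy (Walk.cons Hya Walk.nil))) with hw
  have hcyc : w.IsCycle := by
    rw [Walk.isCycle_def, Walk.isTrail_def]
    refine ⟨?_, by simp [hw], ?_⟩
    · simp only [hw, Walk.edges_cons, Walk.edges_nil, List.pairwise_cons, List.mem_cons,
        List.not_mem_nil, or_false, List.Pairwise.nil, and_true, Sym2.eq, Sym2.rel_iff',
        Prod.mk.injEq, Prod.swap_prod_mk, ne_eq, List.mem_singleton]
      aesop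
    · simp only [hw, Walk.support_cons, Walk.support_nil, List.tail_cons, List.pairwise_cons,
        List.mem_cons, List.not_mem_nil, or_false, List.Pairwise.nil, and_true,
        List.mem_singleton, ne_eq]
      aesop
  have hlen : w.length ≤ 10 := by simp [hw]
  apply hrem a w hcyc hlen
  have hS : {z | z ∈ w.support} = (↑({a, x, c, y} : Finset V) : Set V) := by
    ext z
    simp [hw]
    tauto
  constructor
  · intro hcomp
    exact hAC (hcomp a (by rw [hS]; simp) c (by rw [hS]; simp) hac)
  · rintro ⟨n, hodd, ⟨e⟩⟩
    have h4 : Nat.card {z | z ∈ w.support} = 4 := by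
      rw [hS, Nat.card_coe_set_eq, Set.ncard_coe_finset]
      rw [Finset.card_insert_of_notMem (by simp [hax, hac, hay]),
        Finset.card_insert_of_notMem (by simp [hxc, hxy]),
        Finset.card_insert_of_notMem (by simp [hcy]), Finset.card_singleton]
    have hn : Nat.card {z | z ∈ w.support} = n := Nat.card_eq_of_equiv_fin e.toEquiv
    rw [h4] at hn
    rw [← hn] at hodd
    exact (Nat.not_even_iff_odd.mpr hodd) (by decide)

/-- In a planar graph with no removable cycle of length at most 10, any two distinct
4-cliques are edge-disjoint. -/
theorem cliques_edge_disjoint {V : Type*} [DecidableEq V] (H : SimpleGraph V)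
    (hpl : H.IsPlanar)
    (hrem : ∀ (w : V) (c : H.Walk w w), c.IsCycle → c.length ≤ 10 → ¬ c.IsRemovable)
    (K K' : Finset V) (hK4 : K.card = 4) (hKcl : ∀ x ∈ K, ∀ y ∈ K, x ≠ y → H.Adj x y)
    (hK'4 : K'.card = 4) (hK'cl : ∀ x ∈ K', ∀ y ∈ K', x ≠ y → H.Adj x y)
    (hne : K ≠ K') :
    ∀ x y : V, x ≠ y → x ∈ K → y ∈ K → x ∈ K' → y ∈ K' → False := by
  have hpl5 := hpl.1
  intro x y hxy hxK hyK hxK' hyK'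
  -- get c ∈ K' \ K
  have hsub : ¬ K' ⊆ K := fun h => hne (Finset.eq_of_subset_of_card_le h (by omega)).symm
  obtain ⟨c, hcK', hcK⟩ := Finset.not_subset.mp hsub
  -- get a, b the two other elements of K
  have hT : ((K.erase y).erase x).card = 2 := by
    rw [Finset.card_erase_of_mem (Finset.mem_erase.mpr ⟨hxy, hxK⟩),
      Finset.card_erase_of_mem hyK, hK4]
  obtain ⟨a, b, hab, hTeq⟩ := Finset.card_eq_two.mp hT
  have haT : a ∈ (K.erase y).erase x := by rw [hTeq]; simp
  have hbT : b ∈ (K.erase y).erase x := by rw [hTeq]; simp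
  have haK : a ∈ K := Finset.mem_of_mem_erase (Finset.mem_of_mem_erase haT)
  have hbK : b ∈ K := Finset.mem_of_mem_erase (Finset.mem_of_mem_erase hbT)
  have hax : a ≠ x := (Finset.mem_erase.mp haT).1
  have hay : a ≠ y := (Finset.mem_erase.mp (Finset.mem_of_mem_erase haT)).1
  have hbx : b ≠ x := (Finset.mem_erase.mp hbT).1
  have hby : b ≠ y := (Finset.mem_erase.mp (Finset.mem_of_mem_erase hbT)).1
  have hac : a ≠ c := fun h => hcK (h ▸ haK)
  have hbc : b ≠ c := fun h => hcK (h ▸ hbK)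
  have hxc : x ≠ c := fun h => hcK (h ▸ hxK)
  have hyc : y ≠ c := fun h => hcK (h ▸ hyK)
  -- adjacencies
  have Hxy : H.Adj x y := hKcl x hxK y hyK hxy
  have Hax : H.Adj a x := hKcl a haK x hxK hax
  have Hay : H.Adj a y := hKcl a haK y hyK hay
  have Hbx : H.Adj b x := hKcl b hbK x hxK hbx
  have Hby : H.Adj b y := hKcl b hbK y hyK hby
  have Hab : H.Adj a b := hKcl a haK b hbK hab
  have Hxc : H.Adj x c := hK'cl x hxK' c hcK' hxc
  have Hcy : H.Adj c y := hK'cl c hcK' y hyK' hyc.symm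
  have Hac : H.Adj a c :=
    adj_of_cycle4 hrem hax hac hay hxc hxy hyc.symm Hax Hxc Hcy Hay.symm
  have Hbc : H.Adj b c :=
    adj_of_cycle4 hrem hbx hbc hby hxc hxy hyc.symm Hbx Hxc Hcy Hby.symm
  -- K5 minor
  apply hpl5
  apply K5_minor_of_clique H ![x, y, a, b, c]
  intro i j hij
  fin_cases i <;> fin_cases j <;>
    simp only [Matrix.cons_val', Matrix.cons_val_zero, Matrix.cons_val_one, Matrix.head_cons,
      Matrix.cons_val_succ, Matrix.head_fin_const, Matrix.empty_val',
      Matrix.cons_val_fin_one] <;>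
    first
      | exact absurd rfl hij
      | exact Hxy | exact Hxy.symm | exact Hax | exact Hax.symm | exact Hay | exact Hay.symm
      | exact Hbx | exact Hbx.symm | exact Hby | exact Hby.symm | exact Hab | exact Hab.symm
      | exact Hxc | exact Hxc.symm | exact Hcy | exact Hcy.symm | exact Hac | exact Hac.symm
      | exact Hbc | exact Hbc.symm
end

section
/- Let H be a planar graph containing no removable cycle of length at most 10, let K be a 4-clique in H, and let C be a simple cycle of length 3 in H with V(C) not a subset of V(K). Then C and K share no edge. -/
open SimpleGraph

lemma singleton_connected {V : Type*} (G : SimpleGraph V) (v : V) :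
    (G.induce {v}).Connected := by
  have : Nonempty ({v} : Set V) := ⟨⟨v, rfl⟩⟩
  exact ⟨fun x y => by rw [Subsingleton.elim x y]⟩

lemma hasMinor_K5 {V : Type*} (H : SimpleGraph V) (f : Fin 5 → V)
    (hadj : ∀ i j : Fin 5, i ≠ j → H.Adj (f i) (f j)) :
    H.HasMinor (completeGraph (Fin 5)) := by
  refine ⟨fun i => {f i}, fun i => ⟨f i, rfl⟩, fun i => singleton_connected H (f i), ?_, ?_⟩
  · intro i j hij
    simp only [Set.disjoint_singleton]
    exact (hadj i j hij).ne
  · intro i j hij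
    exact ⟨f i, rfl, f j, rfl, hadj i j (by simpa using hij)⟩

/-- From the 4-cycle w-u-p-v-w we deduce `H.Adj w p`. -/
lemma adj_of_four_cycle {V : Type*} [DecidableEq V] (H : SimpleGraph V)
    (hrem : ∀ (w : V) (c : H.Walk w w), c.IsCycle → c.length ≤ 10 → ¬ c.IsRemovable)
    {u v w p : V}
    (huv : H.Adj u v) (hwu : H.Adj w u) (hwv : H.Adj w v)
    (hup : H.Adj u p) (hvp : H.Adj v p) (hwp : w ≠ p) :
    H.Adj w p := by
  have hwu' : w ≠ u := hwu.ne
  have hwv' : w ≠ v := hwv.ne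
  have hup' : u ≠ p := hup.ne
  have hvp' : v ≠ p := hvp.ne
  have huv' : u ≠ v := huv.ne
  set cyc : H.Walk w w :=
    Walk.cons hwu (Walk.cons hup (Walk.cons hvp.symm (Walk.cons hwv.symm Walk.nil))) with hcyc
  have hcycle : cyc.IsCycle := by
    rw [Walk.isCycle_def]
    refine ⟨⟨?_⟩, by simp [hcyc], ?_⟩
    · simp only [hcyc, Walk.edges_cons, Walk.edges_nil, List.nodup_cons, List.mem_cons,
        List.not_mem_nil, or_false, List.nodup_nil, and_true, Sym2.eq_iff]
      push_neg
      tauto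
    · simp only [hcyc, Walk.support_cons, Walk.support_nil, List.tail_cons, List.nodup_cons,
        List.mem_cons, List.not_mem_nil, or_false, List.nodup_nil, and_true]
      push_neg
      tauto
  have hS : {x | x ∈ cyc.support} = ({w, u, p, v} : Set V) := by
    ext x
    simp only [hcyc, Walk.support_cons, Walk.support_nil, List.mem_cons, List.not_mem_nil,
      or_false, Set.mem_setOf_eq, Set.mem_insert_iff, Set.mem_singleton_iff]
    tauto
  have hnB : ¬ H.InducedOddCycle {x | x ∈ cyc.support} := by
    rintro ⟨n, hodd, ⟨iso⟩⟩
    have hn : n = Nat.card ({x | x ∈ cyc.support} : Set V) := by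
      have := Nat.card_congr iso.toEquiv
      simpa using this.symm
    rw [hS] at hn
    have h4 : ({w, u, p, v} : Set V).ncard = 4 := by
      rw [Set.ncard_insert_of_notMem (by simp [hwu', hwp, hwv']),
        Set.ncard_insert_of_notMem (by simp [hup', huv']),
        Set.ncard_insert_of_notMem (by simp [hvp'.symm]),
        Set.ncard_singleton]
    rw [Nat.card_coe_set_eq, h4] at hn
    subst hn
    exact (by decide : ¬ Odd 4) hodd
  have hA : H.InducedComplete {x | x ∈ cyc.support} := by
    by_contra hA
    exact hrem w cyc hcycle (by simp [hcyc]) ⟨hA, hnB⟩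
  exact hA w (by rw [hS]; simp) p (by rw [hS]; simp) hwp

lemma key_false {V : Type*} [DecidableEq V] (H : SimpleGraph V)
    (hpl : H.IsPlanar)
    (hrem : ∀ (w : V) (c : H.Walk w w), c.IsCycle → c.length ≤ 10 → ¬ c.IsRemovable)
    (K : Finset V) (hK4 : K.card = 4) (hKcl : ∀ x ∈ K, ∀ y ∈ K, x ≠ y → H.Adj x y)
    {u v w : V} (hu : u ∈ K) (hv : v ∈ K) (hw : w ∉ K) (huv' : u ≠ v)
    (hwu : H.Adj w u) (hwv : H.Adj w v) : False := by
  have huv : H.Adj u v := hKcl u hu v hv huv'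
  have hvK : v ∈ K.erase u := Finset.mem_erase.mpr ⟨huv'.symm, hv⟩
  have hcard2 : ((K.erase u).erase v).card = 2 := by
    rw [Finset.card_erase_of_mem hvK, Finset.card_erase_of_mem hu, hK4]
  obtain ⟨p, q, hpq, hset⟩ := Finset.card_eq_two.mp hcard2
  have hp : p ∈ (K.erase u).erase v := by rw [hset]; simp
  have hq : q ∈ (K.erase u).erase v := by rw [hset]; simp
  obtain ⟨hpv, hpu, hpK⟩ : p ≠ v ∧ p ≠ u ∧ p ∈ K := by
    simp only [Finset.mem_erase] at hp; tauto
  obtain ⟨hqv, hqu, hqK⟩ : q ≠ v ∧ q ≠ u ∧ q ∈ K := by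
    simp only [Finset.mem_erase] at hq; tauto
  have hwp' : w ≠ p := fun h => hw (h ▸ hpK)
  have hwq' : w ≠ q := fun h => hw (h ▸ hqK)
  have hup : H.Adj u p := hKcl u hu p hpK (Ne.symm hpu)
  have hvp : H.Adj v p := hKcl v hv p hpK (Ne.symm hpv)
  have huq : H.Adj u q := hKcl u hu q hqK (Ne.symm hqu)
  have hvq : H.Adj v q := hKcl v hv q hqK (Ne.symm hqv)
  have hpqa : H.Adj p q := hKcl p hpK q hqK hpq
  have hwp : H.Adj w p := adj_of_four_cycle H hrem huv hwu hwv hup hvp hwp'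
  have hwq : H.Adj w q := adj_of_four_cycle H hrem huv hwu hwv huq hvq hwq'
  have hadj : ∀ i j : Fin 5, i ≠ j → H.Adj (![u, v, w, p, q] i) (![u, v, w, p, q] j) := by
    intro i j hij
    fin_cases i <;> fin_cases j <;>
      first
        | exact absurd rfl hij
        | exact huv | exact huv.symm | exact hwu | exact hwu.symm
        | exact hwv | exact hwv.symm | exact hup | exact hup.symm
        | exact hvp | exact hvp.symm | exact huq | exact huq.symm
        | exact hvq | exact hvq.symm | exact hpqa | exact hpqa.symm
        | exact hwp | exact hwp.symm | exact hwq | exact hwq.symm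
  exact hpl.1 (hasMinor_K5 H _ hadj)

/-- In a planar graph with no removable cycle of length at most 10, a triangle whose
vertex set is not contained in a given 4-clique shares no edge with that clique. -/
theorem triangle_clique_edge_disjoint {V : Type*} [DecidableEq V] (H : SimpleGraph V)
    (hpl : H.IsPlanar)
    (hrem : ∀ (w : V) (c : H.Walk w w), c.IsCycle → c.length ≤ 10 → ¬ c.IsRemovable)
    (K : Finset V) (hK4 : K.card = 4) (hKcl : ∀ x ∈ K, ∀ y ∈ K, x ≠ y → H.Adj x y)
    {a : V} (c : H.Walk a a) (hc : c.IsCycle) (hlen : c.length = 3)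
    (hnsub : ¬ ∀ x ∈ c.support, x ∈ K) :
    ∀ x ∈ K, ∀ y ∈ K, s(x, y) ∉ c.edges := by
  push_neg at hnsub
  obtain ⟨z, hzsup, hzK⟩ := hnsub
  intro x hx y hy hmem
  cases c with
  | nil => simp at hlen
  | @cons _ b _ h₁ p =>
    cases p with
    | nil => simp at hlen
    | @cons _ d _ h₂ p =>
      cases p with
      | nil => simp at hlen
      | @cons _ e _ h₃ p =>
        cases p with
        | @cons _ f _ h₄ p => simp only [Walk.length_cons] at hlen; omega
        | nil =>
          simp only [Walk.support_cons, Walk.support_nil, List.mem_cons,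
            List.not_mem_nil, or_false] at hzsup
          simp only [Walk.edges_cons, Walk.edges_nil, List.mem_cons,
            List.not_mem_nil, or_false, Sym2.eq_iff] at hmem
          have hza : z = a ∨ z = b ∨ z = d := by tauto
          rcases hmem with (⟨rfl, rfl⟩ | ⟨rfl, rfl⟩) | (⟨rfl, rfl⟩ | ⟨rfl, rfl⟩) | (⟨rfl, rfl⟩ | ⟨rfl, rfl⟩)
          · -- x = a, y = b : third is d
            have hzd : z = d := by
              rcases hza with rfl | rfl | rfl
              · exact absurd hx hzK
              · exact absurd hy hzK
              · rfl
            subst hzd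
            exact key_false H hpl hrem K hK4 hKcl hx hy hzK h₁.ne h₃ h₂.symm
          · have hzd : z = d := by
              rcases hza with rfl | rfl | rfl
              · exact absurd hy hzK
              · exact absurd hx hzK
              · rfl
            subst hzd
            exact key_false H hpl hrem K hK4 hKcl hy hx hzK h₁.ne h₃ h₂.symm
          · -- x = b, y = d : third is a
            have hzd : z = a := by
              rcases hza with rfl | rfl | rfl
              · rfl
              · exact absurd hx hzK
              · exact absurd hy hzK
            subst hzd
            exact key_false H hpl hrem K hK4 hKcl hx hy hzK h₂.ne h₁ h₃.symm
          · have hzd : z = a := by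
              rcases hza with rfl | rfl | rfl
              · rfl
              · exact absurd hy hzK
              · exact absurd hx hzK
            subst hzd
            exact key_false H hpl hrem K hK4 hKcl hy hx hzK h₂.ne h₁ h₃.symm
          · -- x = d, y = a : third is b
            have hzd : z = b := by
              rcases hza with rfl | rfl | rfl
              · exact absurd hy hzK
              · rfl
              · exact absurd hx hzK
            subst hzd
            exact key_false H hpl hrem K hK4 hKcl hx hy hzK h₃.ne h₂ h₁.symm
          · have hzd : z = b := by
              rcases hza with rfl | rfl | rfl
              · exact absurd hx hzK
              · rfl
              · exact absurd hy hzK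
            subst hzd
            exact key_false H hpl hrem K hK4 hKcl hy hx hzK h₃.ne h₂ h₁.symm
end

section
/- For every non-negative integer k, any proper 4-coloring φ of the gadget graph G_k satisfies φ(v_{(k,1)}) = φ(v_{(0,1)}) and φ(v_{(k,2)}) = φ(v_{(0,2)}). -/
open SimpleGraph

/-- Vertices of the planar lower-bound gadget: (level i, side j, kind) where kinds
0,1,2 are the triangle vertices a,b,c and kind 3 is the vertex v. Vertices with
level > k (and the kinds 0,1,2 at level 0) are isolated in the gadget graph G_k. -/
abbrev GadgetV : Type := ℕ × Bool × Fin 4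

/-- The edges of the gadget graph G_k. -/
def gadgetRel (k : ℕ) : GadgetV → GadgetV → Prop := fun x y =>
  (x.1 = 0 ∧ y.1 = 0 ∧ x.2.2 = 3 ∧ y.2.2 = 3 ∧ x.2.1 ≠ y.2.1) ∨
  (1 ≤ x.1 ∧ x.1 ≤ k ∧ x.1 = y.1 ∧ x.2.1 = y.2.1 ∧
    x.2.2 < 3 ∧ y.2.2 < 3 ∧ x.2.2 ≠ y.2.2) ∨
  (1 ≤ x.1 ∧ x.1 ≤ k ∧ x.2.1 = y.2.1 ∧ x.2.2 < 3 ∧ y.2.2 = 3 ∧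
    (y.1 = x.1 ∨ y.1 + 1 = x.1))

/-- The planar lower-bound gadget graph G_k. -/
def gadgetGraph (k : ℕ) : SimpleGraph GadgetV := SimpleGraph.fromRel (gadgetRel k)

/-- In `Fin 4`, if `a,b,c` are pairwise distinct and `u,w` both avoid all of them,
then `u = w`. -/
lemma fin4_force : ∀ a b c u w : Fin 4, a ≠ b → a ≠ c → b ≠ c →
    u ≠ a → u ≠ b → u ≠ c → w ≠ a → w ≠ b → w ≠ c → u = w := by decide

/-- Triangle edges at level `n+1 ≤ k`. -/
lemma adj_tri (k n : ℕ) (hn : n + 1 ≤ k) (j : Bool) (t s : Fin 4)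
    (ht : t < 3) (hs : s < 3) (hts : t ≠ s) :
    (gadgetGraph k).Adj (n+1, j, t) (n+1, j, s) := by
  rw [gadgetGraph, fromRel_adj]
  refine ⟨by simp [hts], Or.inl (Or.inr (Or.inl ?_))⟩
  exact ⟨Nat.le_add_left 1 n, hn, rfl, rfl, ht, hs, hts⟩

/-- Edges from a triangle vertex at level `n+1 ≤ k` to the `v` vertices at
levels `n+1` and `n`. -/
lemma adj_v (k n : ℕ) (hn : n + 1 ≤ k) (j : Bool) (t : Fin 4) (ht : t < 3) (m : ℕ)
    (hm : m = n + 1 ∨ m + 1 = n + 1) :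
    (gadgetGraph k).Adj (n+1, j, t) (m, j, 3) := by
  rw [gadgetGraph, fromRel_adj]
  refine ⟨?_, Or.inl (Or.inr (Or.inr ⟨Nat.le_add_left 1 n, hn, rfl, ht, rfl, hm⟩))⟩
  intro h
  have : t = 3 := by simpa using congrArg (fun x : GadgetV => x.2.2) h
  omega

/-- Any proper 4-coloring of G_k gives v_{(k,j)} the same color as v_{(0,j)}, j ∈ {1,2}. -/
theorem gadget_four_coloring_forced (k : ℕ) (φ : (gadgetGraph k).Coloring (Fin 4)) :
    φ (k, false, 3) = φ (0, false, 3) ∧ φ (k, true, 3) = φ (0, true, 3) := by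
  suffices h : ∀ i, i ≤ k → ∀ j, φ (i, j, 3) = φ (0, j, 3) from
    ⟨h k le_rfl false, h k le_rfl true⟩
  intro i
  induction i with
  | zero => intro _ _; rfl
  | succ n ih =>
    intro hi j
    rw [← ih (Nat.le_of_succ_le hi) j]
    refine fin4_force (φ (n+1, j, 0)) (φ (n+1, j, 1)) (φ (n+1, j, 2)) _ _
      (φ.valid (adj_tri k n hi j 0 1 (by decide) (by decide) (by decide)))
      (φ.valid (adj_tri k n hi j 0 2 (by decide) (by decide) (by decide)))
      (φ.valid (adj_tri k n hi j 1 2 (by decide) (by decide) (by decide)))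
      (fun h => φ.valid (adj_v k n hi j 0 (by decide) (n+1) (Or.inl rfl)) h.symm)
      (fun h => φ.valid (adj_v k n hi j 1 (by decide) (n+1) (Or.inl rfl)) h.symm)
      (fun h => φ.valid (adj_v k n hi j 2 (by decide) (n+1) (Or.inl rfl)) h.symm)
      (fun h => φ.valid (adj_v k n hi j 0 (by decide) n (Or.inr rfl)) h.symm)
      (fun h => φ.valid (adj_v k n hi j 1 (by decide) n (Or.inr rfl)) h.symm)
      (fun h => φ.valid (adj_v k n hi j 2 (by decide) n (Or.inr rfl)) h.symm)
end

section
/- For every non-negative integer k and each j ∈ {1,2}, the distance between v_{(0,j)} and v_{(k,j)} in the gadget graph G_k equals 2k; in particular |V(G_k)| = 8k + 2. -/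
open SimpleGraph

/-- The actual (non-isolated) vertex set of G_k. -/
def gadgetVerts (k : ℕ) : Set GadgetV := {x | x.1 ≤ k ∧ (x.1 = 0 → x.2.2 = 3)}

/-- Potential function used for the distance lower bound. -/
def gadgetF (x : GadgetV) : ℕ := if x.2.2 = 3 then 2 * x.1 else 2 * x.1 - 1

lemma gadget_lip (k : ℕ) {x y : GadgetV} (h : (gadgetGraph k).Adj x y) :
    gadgetF y ≤ gadgetF x + 1 := by
  obtain ⟨i, jx, t⟩ := x
  obtain ⟨i', jy, t'⟩ := y
  rw [gadgetGraph, SimpleGraph.fromRel_adj] at h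
  fin_cases t <;> fin_cases t' <;>
    simp_all [gadgetRel, gadgetF] <;> omega

lemma gadget_walk_bound (k : ℕ) {u v : gadgetVerts k}
    (p : ((gadgetGraph k).induce (gadgetVerts k)).Walk u v) :
    gadgetF v.val ≤ gadgetF u.val + p.length := by
  induction p with
  | nil => simp
  | @cons u w v h p ih =>
    have h' : gadgetF (w : GadgetV) ≤ gadgetF (u : GadgetV) + 1 := gadget_lip k h
    simp only [SimpleGraph.Walk.length_cons]
    omega

lemma gadget_adjA (k i : ℕ) (j : Bool) (h : i + 1 ≤ k) :
    (gadgetGraph k).Adj (i, j, 3) (i + 1, j, 0) := by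
  rw [gadgetGraph, SimpleGraph.fromRel_adj]
  refine ⟨by simp, Or.inr ?_⟩
  right; right
  exact ⟨by omega, h, rfl, (by decide : (0:Fin 4) < 3), rfl, Or.inr rfl⟩

lemma gadget_adjB (k i : ℕ) (j : Bool) (h1 : 1 ≤ i) (h : i ≤ k) :
    (gadgetGraph k).Adj (i, j, 0) (i, j, 3) := by
  rw [gadgetGraph, SimpleGraph.fromRel_adj]
  refine ⟨by simp, Or.inl ?_⟩
  right; right
  exact ⟨h1, h, rfl, (by decide : (0:Fin 4) < 3), rfl, Or.inl rfl⟩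

lemma gadget_walk_exists (k : ℕ) (j : Bool) :
    ∀ i (hik : i ≤ k),
      ∃ p : ((gadgetGraph k).induce (gadgetVerts k)).Walk
        ⟨(0, j, 3), Nat.zero_le k, fun _ => rfl⟩
        ⟨(i, j, 3), hik, fun _ => rfl⟩, p.length = 2 * i := by
  intro i
  induction i with
  | zero => exact fun _ => ⟨SimpleGraph.Walk.nil, rfl⟩
  | succ i ih =>
    intro hik
    obtain ⟨p, hp⟩ := ih (by omega)
    have ha : ((gadgetGraph k).induce (gadgetVerts k)).Adj
        ⟨(i, j, 3), by omega, fun _ => rfl⟩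
        ⟨(i + 1, j, 0), hik, by omega⟩ := gadget_adjA k i j hik
    have hb : ((gadgetGraph k).induce (gadgetVerts k)).Adj
        ⟨(i + 1, j, 0), hik, by omega⟩
        ⟨(i + 1, j, 3), hik, fun _ => rfl⟩ := gadget_adjB k (i + 1) j (by omega) hik
    exact ⟨(p.concat ha).concat hb, by simp [hp]; ring⟩

/-- The vertices as a Finset. -/
def gadgetFinset (k : ℕ) : Finset GadgetV :=
  (Finset.range (k + 1) ×ˢ (Finset.univ : Finset (Bool × Fin 4))).filter
    (fun x => x.1 = 0 → x.2.2 = 3)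

lemma gadgetFinset_card (k : ℕ) : (gadgetFinset k).card = 8 * k + 2 := by
  induction k with
  | zero => decide
  | succ k ih =>
    have : gadgetFinset (k + 1) =
        gadgetFinset k ∪ ({k + 1} ×ˢ (Finset.univ : Finset (Bool × Fin 4))) := by
      ext ⟨i, j, t⟩
      simp only [gadgetFinset, Finset.mem_filter, Finset.mem_product, Finset.mem_range,
        Finset.mem_union, Finset.mem_singleton, Finset.mem_univ, and_true, true_and]
      constructor
      · rintro ⟨hi, hp⟩
        by_cases h : i = k + 1
        · exact Or.inr h
        · exact Or.inl ⟨by omega, hp⟩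
      · rintro (⟨hi, hp⟩ | h)
        · exact ⟨by omega, hp⟩
        · exact ⟨by omega, fun h0 => by omega⟩
    rw [this, Finset.card_union_of_disjoint, ih]
    · simp; ring
    · rw [Finset.disjoint_right]
      rintro ⟨i, j, t⟩ hm hm'
      simp only [Finset.mem_product, Finset.mem_singleton] at hm
      simp only [gadgetFinset, Finset.mem_filter, Finset.mem_product, Finset.mem_range] at hm'
      omega

lemma gadgetVerts_eq (k : ℕ) : gadgetVerts k = ↑(gadgetFinset k) := by
  ext ⟨i, j, t⟩
  simp [gadgetVerts, gadgetFinset, Nat.lt_succ_iff]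


/-- In G_k the distance between v_{(0,j)} and v_{(k,j)} equals 2k, and |V(G_k)| = 8k + 2. -/
theorem gadget_dist_and_card (k : ℕ) (j : Bool) :
    ((gadgetGraph k).induce (gadgetVerts k)).dist
        ⟨(0, j, 3), Nat.zero_le k, fun _ => rfl⟩
        ⟨(k, j, 3), le_refl k, fun _ => rfl⟩ = 2 * k ∧
    (gadgetVerts k).ncard = 8 * k + 2 := by
  constructor
  · obtain ⟨p, hp⟩ := gadget_walk_exists k j k (le_refl k)
    refine le_antisymm (hp ▸ SimpleGraph.dist_le p) ?_
    obtain ⟨q, hq⟩ := (SimpleGraph.Walk.reachable p).exists_walk_length_eq_dist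
    have := gadget_walk_bound k q
    simp [gadgetF] at this
    omega
  · rw [gadgetVerts_eq, Set.ncard_coe_finset, gadgetFinset_card]
end

section
/- For any non-negative integers k and t with t < k, the balls of radius t around v_{(k,j₁)} and around v_{(0,j₂)} in the gadget graph G_k are disjoint, for every j₁, j₂ ∈ {1,2}. -/
open SimpleGraph

/-- The ball of radius t around v: all vertices reachable by a walk of length at most t. -/
def gadgetBall (G : SimpleGraph GadgetV) (v : GadgetV) (t : ℕ) : Set GadgetV :=
  {u | ∃ p : G.Walk v u, p.length ≤ t}

/-- Potential function: 2·level for v-vertices, 2·level − 1 for triangle vertices. -/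
def gadgetPot (x : GadgetV) : ℕ := if x.2.2 = 3 then 2 * x.1 else 2 * x.1 - 1

lemma gadgetRel_pot {k : ℕ} {x y : GadgetV} (h : gadgetRel k x y) :
    gadgetPot y ≤ gadgetPot x + 1 ∧ gadgetPot x ≤ gadgetPot y + 1 := by
  unfold gadgetPot
  rcases h with ⟨h1, h2, h3, h4, _⟩ | ⟨h1, _, h3, _, h5, h6, _⟩ | ⟨h1, _, _, h4, h5, h6⟩
  · simp [h1, h2, h3, h4]
  · rw [if_neg (ne_of_lt h5), if_neg (ne_of_lt h6)]
    omega
  · rw [if_neg (ne_of_lt h4), if_pos h5]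
    omega

lemma gadget_adj_pot {k : ℕ} {x y : GadgetV} (h : (gadgetGraph k).Adj x y) :
    gadgetPot y ≤ gadgetPot x + 1 ∧ gadgetPot x ≤ gadgetPot y + 1 := by
  rw [gadgetGraph, fromRel_adj] at h
  rcases h.2 with h' | h'
  · exact gadgetRel_pot h'
  · exact (gadgetRel_pot h').symm

lemma gadget_walk_pot {k : ℕ} {a b : GadgetV} (p : (gadgetGraph k).Walk a b) :
    gadgetPot b ≤ gadgetPot a + p.length ∧ gadgetPot a ≤ gadgetPot b + p.length := by
  induction p with
  | nil => simp
  | cons h p ih =>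
    have := gadget_adj_pot h
    simp only [SimpleGraph.Walk.length_cons]
    omega

/-- For t < k, the radius-t balls around v_{(k,j₁)} and v_{(0,j₂)} in G_k are disjoint. -/
theorem gadget_balls_disjoint (k t : ℕ) (ht : t < k) (j₁ j₂ : Bool) :
    Disjoint (gadgetBall (gadgetGraph k) (k, j₁, 3) t)
      (gadgetBall (gadgetGraph k) (0, j₂, 3) t) := by
  rw [Set.disjoint_left]
  rintro u ⟨p, hp⟩ ⟨q, hq⟩
  have h1 := gadget_walk_pot p
  have h2 := gadget_walk_pot q
  have hk : gadgetPot (k, j₁, 3) = 2 * k := by simp [gadgetPot]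
  have h0 : gadgetPot (0, j₂, 3) = 0 := by simp [gadgetPot]
  omega
end

section
/- For every non-negative integer k, any proper 3-coloring φ of the outerplanar gadget graph G_k satisfies φ(v_k) = φ(v₀) and φ(u_k) = φ(u₀). -/
open SimpleGraph

/-- Vertices of the outerplanar lower-bound gadget: (level i, kind) with kinds
0,1,2,3,4,5 standing for a_i, b_i, c_i, d_i, v_i, u_i respectively. Vertices with
level > k (and kinds 0..3 at level 0) are isolated in the gadget graph G_k. -/
def outerRel (k : ℕ) : (ℕ × Fin 6) → (ℕ × Fin 6) → Prop := fun x y =>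
  (x.1 = 0 ∧ y.1 = 0 ∧ x.2 = 4 ∧ y.2 = 5) ∨
  (1 ≤ x.1 ∧ x.1 ≤ k ∧ x.1 = y.1 ∧
    ((x.2 = 0 ∧ y.2 = 1) ∨ (x.2 = 2 ∧ y.2 = 3) ∨
      ((x.2 = 0 ∨ x.2 = 1) ∧ y.2 = 4) ∨ ((x.2 = 2 ∨ x.2 = 3) ∧ y.2 = 5))) ∨
  (1 ≤ x.1 ∧ x.1 ≤ k ∧ y.1 + 1 = x.1 ∧
    (((x.2 = 0 ∨ x.2 = 1) ∧ y.2 = 4) ∨ ((x.2 = 2 ∨ x.2 = 3) ∧ y.2 = 5)))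

/-- The outerplanar lower-bound gadget graph G_k. -/
def outerGadget (k : ℕ) : SimpleGraph (ℕ × Fin 6) := SimpleGraph.fromRel (outerRel k)

lemma fin3_unique : ∀ a b c d : Fin 3, a ≠ b → c ≠ a → c ≠ b → d ≠ a → d ≠ b → c = d := by
  decide

lemma adj_of_rel {k : ℕ} {x y : ℕ × Fin 6} (hne : x ≠ y) (h : outerRel k x y) :
    (outerGadget k).Adj x y := ⟨hne, Or.inl h⟩

/-- Any proper 3-coloring of the outerplanar gadget G_k gives v_k the color of v₀ and
u_k the color of u₀. -/
theorem outer_gadget_three_coloring_forced (k : ℕ)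
    (φ : (outerGadget k).Coloring (Fin 3)) :
    φ (k, 4) = φ (0, 4) ∧ φ (k, 5) = φ (0, 5) := by
  suffices H : ∀ i ≤ k, φ (i, 4) = φ (0, 4) ∧ φ (i, 5) = φ (0, 5) from H k le_rfl
  intro i hi
  induction i with
  | zero => exact ⟨rfl, rfl⟩
  | succ n ih =>
    obtain ⟨h4, h5⟩ := ih (Nat.le_of_succ_le hi)
    have h1 : 1 ≤ n + 1 := Nat.succ_le_succ (Nat.zero_le n)
    constructor
    · have ha : φ (n+1, 0) ≠ φ (n+1, 1) :=
        φ.valid (adj_of_rel (by simp) (Or.inr (Or.inl ⟨h1, hi, rfl, Or.inl ⟨rfl, rfl⟩⟩)))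
      have h04 : φ (n+1, 0) ≠ φ (n+1, 4) :=
        φ.valid (adj_of_rel (by simp) (Or.inr (Or.inl ⟨h1, hi, rfl, by tauto⟩)))
      have h14 : φ (n+1, 1) ≠ φ (n+1, 4) :=
        φ.valid (adj_of_rel (by simp) (Or.inr (Or.inl ⟨h1, hi, rfl, by tauto⟩)))
      have h04' : φ (n+1, 0) ≠ φ (n, 4) :=
        φ.valid (adj_of_rel (by simp) (Or.inr (Or.inr ⟨h1, hi, rfl, by tauto⟩)))
      have h14' : φ (n+1, 1) ≠ φ (n, 4) :=
        φ.valid (adj_of_rel (by simp) (Or.inr (Or.inr ⟨h1, hi, rfl, by tauto⟩)))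
      rw [← h4]
      exact fin3_unique _ _ _ _ ha h04.symm h14.symm h04'.symm h14'.symm
    · have ha : φ (n+1, 2) ≠ φ (n+1, 3) :=
        φ.valid (adj_of_rel (by simp) (Or.inr (Or.inl ⟨h1, hi, rfl, by tauto⟩)))
      have h04 : φ (n+1, 2) ≠ φ (n+1, 5) :=
        φ.valid (adj_of_rel (by simp) (Or.inr (Or.inl ⟨h1, hi, rfl, by tauto⟩)))
      have h14 : φ (n+1, 3) ≠ φ (n+1, 5) :=
        φ.valid (adj_of_rel (by simp) (Or.inr (Or.inl ⟨h1, hi, rfl, by tauto⟩)))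
      have h04' : φ (n+1, 2) ≠ φ (n, 5) :=
        φ.valid (adj_of_rel (by simp) (Or.inr (Or.inr ⟨h1, hi, rfl, by tauto⟩)))
      have h14' : φ (n+1, 3) ≠ φ (n, 5) :=
        φ.valid (adj_of_rel (by simp) (Or.inr (Or.inr ⟨h1, hi, rfl, by tauto⟩)))
      rw [← h5]
      exact fin3_unique _ _ _ _ ha h04.symm h14.symm h04'.symm h14'.symm
end
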